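/- arXiv:math/0409313 — 2 statements merged into one kernel-verified Lean document; each statement's English description precedes it below -/
import Mathlib

section
/- For any N ≥ 0, γ ∈ (0,1], and x, y ∈ ℝ^d, the weight μ_{N,γ}(x) = (1+|x|²)^N / (1+γ|x|²)^N satisfies μ_{N,γ}(x)/μ_{N,γ}(y) + μ_{N,γ}(y)/μ_{N,γ}(x) ≤ C_N (1+|x−y|²)^N, where C_N depends only on N (and d). -/
/-! With `f_γ(s) = (1 + s) / (1 + γ s)` one has `μ_{N,γ}(x) = f_γ(|x|²)^N`. For `γ ≤ 1` the
function `f_γ` is nondecreasing, satisfies `f_γ(λ s) ≤ λ f_γ(s)` for `λ ≥ 1` and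
`f_γ(s + r) ≤ (1 + r) f_γ(s)`. Since `|x|² ≤ 2 (|y|² + |x - y|²)`, these give
`f_γ(|x|²) ≤ 2 (1 + |x - y|²) f_γ(|y|²)`, and raising to the power `N` gives the claim with
`C_N = 2 ^ (N + 1)`. -/

noncomputable def muWeight (d : ℕ) (N γ : ℝ) (x : EuclideanSpace ℝ (Fin d)) : ℝ :=
  (1 + ‖x‖ ^ 2) ^ N / (1 + γ * ‖x‖ ^ 2) ^ N

lemma norm_sq_le_two_mul_norm_sq_add_norm_sub_sq {E : Type*} [SeminormedAddCommGroup E]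
    (x y : E) : ‖x‖ ^ 2 ≤ 2 * (‖y‖ ^ 2 + ‖x - y‖ ^ 2) :=
  (pow_le_pow_left₀ (norm_nonneg x) (norm_le_norm_add_norm_sub' x y) 2).trans add_sq_le

noncomputable def weightBase (γ s : ℝ) : ℝ := (1 + s) / (1 + γ * s)

namespace weightBase

variable {γ s : ℝ}

lemma pos (hγ : 0 ≤ γ) (hs : 0 ≤ s) : 0 < weightBase γ s := by
  unfold weightBase; positivity

lemma mono (hγ : 0 ≤ γ) (hγ1 : γ ≤ 1) (hs : 0 ≤ s) {s' : ℝ} (hss' : s ≤ s') :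
    weightBase γ s ≤ weightBase γ s' := by
  unfold weightBase
  rw [div_le_div_iff₀ (by positivity) (by nlinarith)]
  nlinarith

lemma mul_le (hγ : 0 ≤ γ) (hs : 0 ≤ s) {c : ℝ} (hc : 1 ≤ c) :
    weightBase γ (c * s) ≤ c * weightBase γ s := by
  unfold weightBase
  rw [mul_div_assoc', div_le_div_iff₀ (by positivity) (by positivity)]
  have hγs : 0 ≤ γ * s := by positivity
  nlinarith [mul_le_mul_of_nonneg_left hc hγs, mul_le_mul_of_nonneg_left hc (mul_nonneg hγs hs),
    mul_nonneg (mul_nonneg hγs hs) (sub_nonneg.2 hc)]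

lemma add_le (hγ : 0 ≤ γ) (hs : 0 ≤ s) {r : ℝ} (hr : 0 ≤ r) :
    weightBase γ (s + r) ≤ (1 + r) * weightBase γ s := by
  unfold weightBase
  rw [mul_div_assoc', div_le_div_iff₀ (by positivity) (by positivity)]
  nlinarith [mul_nonneg hs hr, mul_nonneg (mul_nonneg hγ hs) hr, mul_nonneg hγ hr,
    mul_nonneg (mul_nonneg (mul_nonneg hγ hs) hr) (add_nonneg hs hr)]

lemma le_two_mul_one_add_mul (hγ : 0 ≤ γ) (hγ1 : γ ≤ 1) (hs : 0 ≤ s) {t r : ℝ} (ht : 0 ≤ t)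
    (hr : 0 ≤ r) (hst : s ≤ 2 * (t + r)) :
    weightBase γ s ≤ 2 * (1 + r) * weightBase γ t :=
  calc weightBase γ s ≤ weightBase γ (2 * (t + r)) := mono hγ hγ1 hs hst
    _ ≤ 2 * weightBase γ (t + r) := mul_le hγ (by positivity) one_le_two
    _ ≤ 2 * ((1 + r) * weightBase γ t) := by gcongr; exact add_le hγ ht hr
    _ = 2 * (1 + r) * weightBase γ t := by ring

end weightBase

lemma muWeight_eq_weightBase_rpow {d : ℕ} (N : ℝ) {γ : ℝ} (hγ : 0 ≤ γ)
    (x : EuclideanSpace ℝ (Fin d)) : muWeight d N γ x = weightBase γ (‖x‖ ^ 2) ^ N :=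
  (Real.div_rpow (by positivity) (by positivity) N).symm

lemma muWeight_div_le {d : ℕ} {N γ : ℝ} (hN : 0 ≤ N) (hγ : 0 ≤ γ) (hγ1 : γ ≤ 1)
    (x y : EuclideanSpace ℝ (Fin d)) :
    muWeight d N γ x / muWeight d N γ y ≤ 2 ^ N * (1 + ‖x - y‖ ^ 2) ^ N := by
  have hx := weightBase.pos hγ (sq_nonneg ‖x‖)
  have hy := weightBase.pos hγ (sq_nonneg ‖y‖)
  rw [muWeight_eq_weightBase_rpow N hγ, muWeight_eq_weightBase_rpow N hγ,
    ← Real.div_rpow hx.le hy.le, ← Real.mul_rpow zero_le_two (by positivity)]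
  refine Real.rpow_le_rpow (div_pos hx hy).le ?_ hN
  rw [div_le_iff₀ hy]
  exact weightBase.le_two_mul_one_add_mul hγ hγ1 (sq_nonneg _) (sq_nonneg _) (sq_nonneg _)
    (norm_sq_le_two_mul_norm_sq_add_norm_sub_sq x y)

theorem stmt0 (d : ℕ) (N : ℝ) (hN : 0 ≤ N) :
    ∃ C : ℝ, 0 < C ∧ ∀ γ : ℝ, 0 < γ → γ ≤ 1 →
      ∀ x y : EuclideanSpace ℝ (Fin d),
        muWeight d N γ x / muWeight d N γ y + muWeight d N γ y / muWeight d N γ x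
          ≤ C * (1 + ‖x - y‖ ^ 2) ^ N := by
  refine ⟨2 * 2 ^ N, by positivity, fun γ hγ hγ1 x y => ?_⟩
  have hxy := muWeight_div_le hN hγ.le hγ1 x y
  have hyx := muWeight_div_le hN hγ.le hγ1 y x
  rw [norm_sub_rev] at hyx
  linarith
end

section
/- For any N ≥ 0 and γ ∈ (0,1], Δ μ_{N,γ} = μ_{N,γ} b for a function b with |b(x)| ≤ C_N (1+|x|²)^{-1} for all x ∈ ℝ^d, with C_N independent of γ; similarly Δ(μ_{N,γ}^{-1}) = μ_{N,γ}^{-1} b̃ with |b̃(x)| ≤ C_N(1+|x|²)^{-1}. -/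
/-- The Euclidean Laplacian, written as a sum of repeated directional derivatives. -/
noncomputable def laplacian (d : ℕ) (f : EuclideanSpace ℝ (Fin d) → ℝ)
    (x : EuclideanSpace ℝ (Fin d)) : ℝ :=
  ∑ j : Fin d,
    fderiv ℝ (fun y => fderiv ℝ f y (EuclideanSpace.single j 1)) x (EuclideanSpace.single j 1)

/-!
Both `μ_{N,γ}` and `μ_{N,γ}⁻¹` are radial, `F(|x|²)` with `F(t) = (1+t)^M (1+γt)^{-M}`
and `M = ±N`. For radial functions `Δ F(|x|²) = 4|x|² F''(|x|²) + 2d F'(|x|²)`, and here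
`F' = F P`, `F'' = F (P² + P')` with `P(t) = M/(1+t) - Mγ/(1+γt)`. Since
`γ/(1+γt) ≤ 1/(1+t)` for `γ ≤ 1`, we get `|P| ≤ 2|M|/(1+t)` and `|P'| ≤ 2|M|/(1+t)²`
uniformly in `γ`, so `b = 4tP² + 4tP' + 2dP` is `O((1+t)⁻¹)`.
-/

open Real

section RadialLaplacian

variable {d : ℕ} {f f' f'' : ℝ → ℝ}

lemma fderiv_comp_norm_sq_apply_single (hf : ∀ t, 0 ≤ t → HasDerivAt f (f' t) t)
    (y : EuclideanSpace ℝ (Fin d)) (j : Fin d) :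
    fderiv ℝ (fun z => f (‖z‖ ^ 2)) y (EuclideanSpace.single j 1) = f' (‖y‖ ^ 2) * (2 * y j) := by
  have h : HasFDerivAt (fun z => f (‖z‖ ^ 2)) (f' (‖y‖ ^ 2) • (2 • innerSL ℝ y)) y :=
    (hf _ (sq_nonneg _)).comp_hasFDerivAt y (hasStrictFDerivAt_norm_sq y).hasFDerivAt
  rw [h.fderiv]
  simp [EuclideanSpace.inner_single_right]

lemma laplacian_comp_norm_sq (hf : ∀ t, 0 ≤ t → HasDerivAt f (f' t) t)
    (x : EuclideanSpace ℝ (Fin d)) (hf' : HasDerivAt f' (f'' (‖x‖ ^ 2)) (‖x‖ ^ 2)) :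
    laplacian d (fun y => f (‖y‖ ^ 2)) x =
      4 * ‖x‖ ^ 2 * f'' (‖x‖ ^ 2) + 2 * d * f' (‖x‖ ^ 2) := by
  have hsecond (j : Fin d) :
      fderiv ℝ (fun y => f' (‖y‖ ^ 2) * (2 * y j)) x (EuclideanSpace.single j 1) =
        4 * f'' (‖x‖ ^ 2) * x j ^ 2 + 2 * f' (‖x‖ ^ 2) := by
    have hcoord : HasFDerivAt (fun y : EuclideanSpace ℝ (Fin d) => (2 : ℝ) * y j)
        ((2 : ℝ) • (EuclideanSpace.proj j : EuclideanSpace ℝ (Fin d) →L[ℝ] ℝ)) x :=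
      (EuclideanSpace.proj j : EuclideanSpace ℝ (Fin d) →L[ℝ] ℝ).hasFDerivAt.const_mul 2
    have hradial : HasFDerivAt (fun y : EuclideanSpace ℝ (Fin d) => f' (‖y‖ ^ 2))
        (f'' (‖x‖ ^ 2) • (2 • innerSL ℝ x)) x :=
      hf'.comp_hasFDerivAt x (hasStrictFDerivAt_norm_sq x).hasFDerivAt
    have hprod : HasFDerivAt (fun y : EuclideanSpace ℝ (Fin d) => f' (‖y‖ ^ 2) * (2 * y j)) _ x :=
      hradial.mul hcoord
    rw [hprod.fderiv]
    simp only [add_apply, smul_apply, PiLp.proj_apply,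
      PiLp.single_eq_same, smul_eq_mul, mul_one, coe_innerSL_apply,
      EuclideanSpace.inner_single_right, conj_trivial, one_mul, nsmul_eq_mul, Nat.cast_ofNat]
    ring
  have hnorm : ∑ j : Fin d, x j ^ 2 = ‖x‖ ^ 2 := by
    simp [EuclideanSpace.norm_sq_eq]
  simp only [laplacian, fderiv_comp_norm_sq_apply_single hf, hsecond, Finset.sum_add_distrib,
    ← Finset.mul_sum, hnorm, Finset.sum_const, Finset.card_univ, Fintype.card_fin, nsmul_eq_mul]
  ring

end RadialLaplacian

section RadialWeight

variable {M γ t : ℝ}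

noncomputable def radialWeight (M γ t : ℝ) : ℝ := (1 + t) ^ M * (1 + γ * t) ^ (-M)

noncomputable def radialWeightLogDeriv (M γ t : ℝ) : ℝ := M / (1 + t) - M * γ / (1 + γ * t)

noncomputable def radialWeightLogDeriv' (M γ t : ℝ) : ℝ :=
  -M / (1 + t) ^ 2 + M * γ ^ 2 / (1 + γ * t) ^ 2

lemma hasDerivAt_radialWeight (hγ : 0 ≤ γ) (ht : 0 ≤ t) :
    HasDerivAt (radialWeight M γ) (radialWeight M γ t * radialWeightLogDeriv M γ t) t := by
  have h1 : 0 < 1 + t := by linarith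
  have h2 : 0 < 1 + γ * t := by positivity
  have hnum := ((hasDerivAt_id t).const_add 1).rpow_const (p := M) (Or.inl h1.ne')
  have hden := (((hasDerivAt_id t).const_mul γ).const_add 1).rpow_const (p := -M) (Or.inl h2.ne')
  refine (hnum.mul hden).congr_deriv ?_
  simp only [radialWeight, radialWeightLogDeriv, id]
  rw [rpow_sub_one h1.ne', rpow_sub_one h2.ne']
  field_simp
  ring

lemma hasDerivAt_radialWeightLogDeriv (hγ : 0 ≤ γ) (ht : 0 ≤ t) :
    HasDerivAt (radialWeightLogDeriv M γ) (radialWeightLogDeriv' M γ t) t := by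
  have h1 : 0 < 1 + t := by linarith
  have h2 : 0 < 1 + γ * t := by positivity
  refine (((hasDerivAt_const t M).div ((hasDerivAt_id t).const_add 1) h1.ne').sub
    ((hasDerivAt_const t (M * γ)).div (((hasDerivAt_id t).const_mul γ).const_add 1)
      h2.ne')).congr_deriv ?_
  simp only [radialWeightLogDeriv', id]
  field_simp
  ring

lemma hasDerivAt_radialWeight_mul_logDeriv (hγ : 0 ≤ γ) (ht : 0 ≤ t) :
    HasDerivAt (fun s => radialWeight M γ s * radialWeightLogDeriv M γ s)
      (radialWeight M γ t * (radialWeightLogDeriv M γ t ^ 2 + radialWeightLogDeriv' M γ t)) t :=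
  ((hasDerivAt_radialWeight hγ ht).mul (hasDerivAt_radialWeightLogDeriv hγ ht)).congr_deriv
    (by ring)

lemma div_one_add_mul_le_inv_one_add (hγ : 0 ≤ γ) (hγ1 : γ ≤ 1) (ht : 0 ≤ t) :
    γ / (1 + γ * t) ≤ (1 + t)⁻¹ := by
  rw [div_le_iff₀ (by positivity), ← div_eq_inv_mul, le_div_iff₀ (by linarith)]
  nlinarith

lemma abs_radialWeightLogDeriv_le (hγ : 0 ≤ γ) (hγ1 : γ ≤ 1) (ht : 0 ≤ t) :
    |radialWeightLogDeriv M γ t| ≤ 2 * |M| * (1 + t)⁻¹ := by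
  have hq := div_one_add_mul_le_inv_one_add hγ hγ1 ht
  have h1 : 0 < 1 + t := by linarith
  calc |radialWeightLogDeriv M γ t|
      ≤ |M / (1 + t)| + |M * (γ / (1 + γ * t))| := by
        rw [radialWeightLogDeriv, mul_div_assoc]; exact abs_sub _ _
    _ = |M| * (1 + t)⁻¹ + |M| * (γ / (1 + γ * t)) := by
        rw [abs_div, abs_of_pos h1, abs_mul, abs_of_nonneg (by positivity : 0 ≤ γ / (1 + γ * t)),
          div_eq_mul_inv]
    _ ≤ 2 * |M| * (1 + t)⁻¹ := by nlinarith [abs_nonneg M]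

lemma abs_radialWeightLogDeriv'_le (hγ : 0 ≤ γ) (hγ1 : γ ≤ 1) (ht : 0 ≤ t) :
    |radialWeightLogDeriv' M γ t| ≤ 2 * |M| * ((1 + t)⁻¹) ^ 2 := by
  have hq := pow_le_pow_left₀ (by positivity) (div_one_add_mul_le_inv_one_add hγ hγ1 ht) 2
  calc |radialWeightLogDeriv' M γ t|
      ≤ |-M * ((1 + t)⁻¹) ^ 2| + |M * (γ / (1 + γ * t)) ^ 2| := by
        rw [radialWeightLogDeriv', div_pow, ← mul_div_assoc, inv_pow, ← div_eq_mul_inv]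
        exact abs_add_le _ _
    _ = |M| * ((1 + t)⁻¹) ^ 2 + |M| * (γ / (1 + γ * t)) ^ 2 := by
        rw [abs_mul, abs_mul, abs_neg, abs_sq, abs_sq]
    _ ≤ 2 * |M| * ((1 + t)⁻¹) ^ 2 := by nlinarith [abs_nonneg M]

end RadialWeight

section RadialWeightLaplacian

variable {d : ℕ} {M γ : ℝ}

noncomputable def radialWeightLaplacianFactor (d : ℕ) (M γ : ℝ) (x : EuclideanSpace ℝ (Fin d)) :
    ℝ :=
  4 * ‖x‖ ^ 2 * (radialWeightLogDeriv M γ (‖x‖ ^ 2) ^ 2 + radialWeightLogDeriv' M γ (‖x‖ ^ 2)) +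
    2 * d * radialWeightLogDeriv M γ (‖x‖ ^ 2)

lemma laplacian_radialWeight (hγ : 0 ≤ γ) (x : EuclideanSpace ℝ (Fin d)) :
    laplacian d (fun y => radialWeight M γ (‖y‖ ^ 2)) x =
      radialWeight M γ (‖x‖ ^ 2) * radialWeightLaplacianFactor d M γ x := by
  rw [laplacian_comp_norm_sq (f'' := fun t =>
      radialWeight M γ t * (radialWeightLogDeriv M γ t ^ 2 + radialWeightLogDeriv' M γ t))
    (fun t ht => hasDerivAt_radialWeight hγ ht) x
    (hasDerivAt_radialWeight_mul_logDeriv hγ (sq_nonneg ‖x‖)), radialWeightLaplacianFactor]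
  ring

lemma abs_radialWeightLaplacianFactor_le (hγ : 0 ≤ γ) (hγ1 : γ ≤ 1)
    (x : EuclideanSpace ℝ (Fin d)) :
    |radialWeightLaplacianFactor d M γ x| ≤
      (16 * |M| ^ 2 + 8 * |M| + 4 * d * |M| + 1) * (1 + ‖x‖ ^ 2)⁻¹ := by
  rw [radialWeightLaplacianFactor]
  set t := ‖x‖ ^ 2
  set u := (1 + t)⁻¹
  have ht : 0 ≤ t := by positivity
  have hu : 0 < u := by positivity
  have htu : t * u ≤ 1 := by rw [← div_eq_mul_inv, div_le_one (by linarith)]; linarith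
  have hP := abs_radialWeightLogDeriv_le (M := M) hγ hγ1 ht
  have hP' := abs_radialWeightLogDeriv'_le (M := M) hγ hγ1 ht
  have hPsq : radialWeightLogDeriv M γ t ^ 2 ≤ (2 * |M| * u) ^ 2 := by
    rw [← sq_abs]; exact pow_le_pow_left₀ (abs_nonneg _) hP 2
  calc |4 * t * (radialWeightLogDeriv M γ t ^ 2 + radialWeightLogDeriv' M γ t) +
          2 * d * radialWeightLogDeriv M γ t|
      ≤ 4 * t * (radialWeightLogDeriv M γ t ^ 2 + |radialWeightLogDeriv' M γ t|) +
          2 * d * |radialWeightLogDeriv M γ t| := by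
        refine (abs_add_le _ _).trans ?_
        rw [abs_mul (4 * t), abs_mul (2 * (d : ℝ)), abs_of_nonneg (by positivity : (0 : ℝ) ≤ 4 * t),
          abs_of_nonneg (by positivity : (0 : ℝ) ≤ 2 * d)]
        gcongr
        exact (abs_add_le _ _).trans_eq (by rw [abs_sq])
    _ ≤ 4 * t * ((2 * |M| * u) ^ 2 + 2 * |M| * u ^ 2) + 2 * d * (2 * |M| * u) := by gcongr
    _ = ((16 * |M| ^ 2 + 8 * |M|) * (t * u) + 4 * d * |M|) * u := by ring
    _ ≤ (16 * |M| ^ 2 + 8 * |M| + 4 * d * |M| + 1) * u := by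
        refine mul_le_mul_of_nonneg_right ?_ hu.le
        nlinarith [mul_le_mul_of_nonneg_left htu (by positivity : (0 : ℝ) ≤ 16 * |M| ^ 2 + 8 * |M|)]

end RadialWeightLaplacian

lemma muWeight_eq_radialWeight {d : ℕ} {N γ : ℝ} (hγ : 0 ≤ γ) :
    muWeight d N γ = fun y => radialWeight N γ (‖y‖ ^ 2) := by
  funext y
  rw [muWeight, radialWeight, rpow_neg (by positivity), div_eq_mul_inv]

lemma inv_muWeight_eq_radialWeight {d : ℕ} {N γ : ℝ} :
    (fun y => (muWeight d N γ y)⁻¹) = fun y => radialWeight (-N) γ (‖y‖ ^ 2) := by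
  funext y
  rw [muWeight, radialWeight, rpow_neg (by positivity), neg_neg, inv_div, div_eq_mul_inv,
    mul_comm]

theorem stmt3_general (d : ℕ) (N : ℝ) :
    ∃ C : ℝ, 0 < C ∧ ∀ γ : ℝ, 0 < γ → γ ≤ 1 →
      (∃ b : EuclideanSpace ℝ (Fin d) → ℝ,
        (∀ x, laplacian d (muWeight d N γ) x = muWeight d N γ x * b x) ∧
        (∀ x, |b x| ≤ C * (1 + ‖x‖ ^ 2) ^ (-1 : ℝ))) ∧
      (∃ bt : EuclideanSpace ℝ (Fin d) → ℝ,
        (∀ x, laplacian d (fun y => (muWeight d N γ y)⁻¹) x = (muWeight d N γ x)⁻¹ * bt x) ∧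
        (∀ x, |bt x| ≤ C * (1 + ‖x‖ ^ 2) ^ (-1 : ℝ))) := by
  refine ⟨16 * |N| ^ 2 + 8 * |N| + 4 * d * |N| + 1, by positivity, fun γ hγ hγ1 => ⟨?_, ?_⟩⟩
  · refine ⟨radialWeightLaplacianFactor d N γ, fun x => ?_, fun x => ?_⟩
    · rw [muWeight_eq_radialWeight hγ.le]
      exact laplacian_radialWeight hγ.le x
    · rw [rpow_neg_one]
      exact abs_radialWeightLaplacianFactor_le hγ.le hγ1 x
  · refine ⟨radialWeightLaplacianFactor d (-N) γ, fun x => ?_, fun x => ?_⟩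
    · rw [inv_muWeight_eq_radialWeight, congrFun inv_muWeight_eq_radialWeight x]
      exact laplacian_radialWeight hγ.le x
    · rw [rpow_neg_one, ← abs_neg N]
      exact abs_radialWeightLaplacianFactor_le hγ.le hγ1 x

/-- `Δ μ_{N,γ} = μ_{N,γ} b` with `|b(x)| ≤ C_N (1+|x|²)^{-1}` and
`Δ (μ_{N,γ}⁻¹) = μ_{N,γ}⁻¹ b̃` with `|b̃(x)| ≤ C_N (1+|x|²)^{-1}`, uniformly in `γ ∈ (0,1]`. -/
theorem stmt3 (d : ℕ) (N : ℝ) (hN : 0 ≤ N) :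
    ∃ C : ℝ, 0 < C ∧ ∀ γ : ℝ, 0 < γ → γ ≤ 1 →
      (∃ b : EuclideanSpace ℝ (Fin d) → ℝ,
        (∀ x, laplacian d (muWeight d N γ) x = muWeight d N γ x * b x) ∧
        (∀ x, |b x| ≤ C * (1 + ‖x‖ ^ 2) ^ (-1 : ℝ))) ∧
      (∃ bt : EuclideanSpace ℝ (Fin d) → ℝ,
        (∀ x, laplacian d (fun y => (muWeight d N γ y)⁻¹) x = (muWeight d N γ x)⁻¹ * bt x) ∧
        (∀ x, |bt x| ≤ C * (1 + ‖x‖ ^ 2) ^ (-1 : ℝ))) :=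
  stmt3_general d N
end
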